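/- arXiv:1007.3234 — 3 statements merged into one kernel-verified Lean document; each statement's English description precedes it below -/
import Mathlib

section
/- Let H be a Hilbert space and {P_γ}_{γ∈Γ} a Riesz basis of two-dimensional projections (i.e. P_γ = A Q_γ A⁻¹ for an isomorphism A and orthogonal projections Q_γ forming a basis of projections). Suppose for each γ, f_γ and g_γ are linearly independent unit vectors in the range of P_γ. Then the system {f_γ, g_γ : γ ∈ Γ} is a Riesz basis of H if and only if sup_{γ∈Γ} |⟨f_γ, g_γ⟩| < 1. -/
open scoped ComplexInnerProductSpace

/-- A family of bounded projections is a *basis of projections* if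
`P_α P_β = 0` for `α ≠ β` and `x = Σ_γ P_γ x` for every `x`. -/
def IsBasisOfProjections {H : Type*} [NormedAddCommGroup H] [InnerProductSpace ℂ H]
    {Γ : Type*} (P : Γ → H →L[ℂ] H) : Prop :=
  (∀ γ x, P γ (P γ x) = P γ x) ∧
  (∀ α β, α ≠ β → ∀ x, P α (P β x) = 0) ∧
  (∀ x, HasSum (fun γ => P γ x) x)

/-- A *Riesz basis of projections*: `P_γ = A Q_γ A⁻¹` for an isomorphism `A`
and a basis of orthogonal (self-adjoint) projections `Q_γ`. -/
def IsRieszBasisOfProjections {H : Type*} [NormedAddCommGroup H] [InnerProductSpace ℂ H]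
    [CompleteSpace H] {Γ : Type*} (P : Γ → H →L[ℂ] H) : Prop :=
  ∃ (A : H ≃L[ℂ] H) (Q : Γ → H →L[ℂ] H),
    IsBasisOfProjections Q ∧ (∀ γ, IsSelfAdjoint (Q γ)) ∧
    (∀ γ x, P γ x = A (Q γ (A.symm x)))

/-- A system of vectors is a *Riesz basis* if it is the image of an
orthonormal (Hilbert) basis under an isomorphism of `H`. -/
def IsRieszBasisVectors {H : Type*} [NormedAddCommGroup H] [InnerProductSpace ℂ H]
    [CompleteSpace H] {I : Type*} (f : I → H) : Prop :=
  ∃ (A : H ≃L[ℂ] H) (e : HilbertBasis I ℂ H), ∀ i, f i = A (e i)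

/-!
Conjugating by the isomorphism `A` turns the ranges of the `P γ` into mutually orthogonal planes.
For unit vectors `f, g`, `‖c f + d g‖² = |c|² + |d|² + 2 Re (c̄ d ⟪f, g⟫)` lies between
`(1 ∓ |⟪f, g⟫|) (|c|² + |d|²)`. So when `|⟪f γ, g γ⟫| ≤ κ < 1`, the block-diagonal operator sending
an orthonormal basis of each plane to the transported pair `(f γ, g γ)` is bounded and bounded
below, and its range is dense, hence it is an isomorphism. Conversely, if the system is `B e` with
`e` orthonormal, choose `|z| = 1` with `z ⟪f, g⟫ = |⟪f, g⟫|`; then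
`2 = ‖e₁ - z e₂‖² ≤ ‖B⁻¹‖² ‖f - z g‖² = ‖B⁻¹‖² (2 - 2 |⟪f, g⟫|)`.
-/

open InnerProductSpace

theorem ContinuousLinearMap.exists_sq_norm_le {𝕜 E F : Type*} [NontriviallyNormedField 𝕜]
    [SeminormedAddCommGroup E] [SeminormedAddCommGroup F] [NormedSpace 𝕜 E] [NormedSpace 𝕜 F]
    (L : E →L[𝕜] F) : ∃ C > 0, ∀ x, ‖L x‖ ^ 2 ≤ C * ‖x‖ ^ 2 := by
  obtain ⟨C, hC, hL⟩ := L.bound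
  exact ⟨C ^ 2, by positivity, fun x => by
    rw [← mul_pow]; exact pow_le_pow_left₀ (norm_nonneg _) (hL x) 2⟩

section RieszBasis

variable {H : Type*} [NormedAddCommGroup H] [InnerProductSpace ℂ H] [CompleteSpace H]
  {ι ι' : Type*}

theorem IsRieszBasisVectors.comp_equiv {x : ι → H} (hx : IsRieszBasisVectors x) (σ : ι' ≃ ι) :
    IsRieszBasisVectors (x ∘ σ) := by
  obtain ⟨A, e, he⟩ := hx
  have hspan : ⊤ ≤ (Submodule.span ℂ (Set.range (e ∘ σ))).topologicalClosure := by
    rw [EquivLike.range_comp, e.dense_span]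
  exact ⟨A, .mk (e.orthonormal.comp σ σ.injective) hspan, fun i => by simp [he]⟩

theorem IsRieszBasisVectors.map {x : ι → H} (hx : IsRieszBasisVectors x) (A : H ≃L[ℂ] H) :
    IsRieszBasisVectors (A ∘ x) := by
  obtain ⟨B, e, he⟩ := hx
  exact ⟨B.trans A, e, fun i => by simp [he]⟩

theorem isRieszBasisVectors_of_le_norm_of_denseRange (e : HilbertBasis ι ℂ H) (S : H →L[ℂ] H)
    {c : ℝ} (hc : 0 < c) (hS : ∀ x, c * ‖x‖ ≤ ‖S x‖) (hdense : DenseRange S) :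
    IsRieszBasisVectors (S ∘ e) := by
  have hanti : AntilipschitzWith (Real.toNNReal c⁻¹) S :=
    S.antilipschitz_of_bound fun x => by
      rw [Real.coe_toNNReal _ (by positivity), ← div_eq_inv_mul, le_div_iff₀' hc]
      exact hS x
  have hker : LinearMap.ker (S : H →ₗ[ℂ] H) = ⊥ :=
    LinearMap.ker_eq_bot_of_injective hanti.injective
  have hsurj : Function.Surjective S := by
    rw [← Set.range_eq_univ, ← (hanti.isClosed_range S.uniformContinuous).closure_eq]
    exact hdense.closure_range
  have hrange : LinearMap.range (S : H →ₗ[ℂ] H) = ⊤ := LinearMap.range_eq_top.2 hsurj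
  exact ⟨.ofBijective S hker hrange, e, fun _ => rfl⟩

theorem IsRieszBasisVectors.exists_norm_inner_le {x : ι → H} (hx : IsRieszBasisVectors x) :
    ∃ κ < 1, ∀ i j, i ≠ j → ‖x i‖ = 1 → ‖x j‖ = 1 → ‖⟪x i, x j⟫_ℂ‖ ≤ κ := by
  obtain ⟨A, e, he⟩ := hx
  obtain ⟨C, hC, hAC⟩ := (A.symm : H →L[ℂ] H).exists_sq_norm_le
  refine ⟨1 - 1 / C, sub_lt_self 1 (by positivity), fun i j hij hi hj => ?_⟩
  obtain ⟨z, hz, hzt⟩ := Complex.exists_norm_eq_mul_self ⟪x i, x j⟫_ℂ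
  have horth : ‖e i - z • e j‖ ^ 2 = 2 := by
    rw [@norm_sub_sq ℂ, inner_smul_right, e.orthonormal.2 hij, norm_smul, e.orthonormal.1,
      e.orthonormal.1, hz]
    norm_num
  have hsmall : ‖x i - z • x j‖ ^ 2 = 2 - 2 * ‖⟪x i, x j⟫_ℂ‖ := by
    rw [@norm_sub_sq ℂ, inner_smul_right, ← hzt, norm_smul, hi, hj, hz, RCLike.re_to_complex,
      Complex.ofReal_re]
    ring
  have himage : A.symm (x i - z • x j) = e i - z • e j := by simp [he]
  have hbound : 2 ≤ C * (2 - 2 * ‖⟪x i, x j⟫_ℂ‖) :=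
    calc 2 = ‖A.symm (x i - z • x j)‖ ^ 2 := by rw [himage, horth]
      _ ≤ C * ‖x i - z • x j‖ ^ 2 := hAC _
      _ = C * (2 - 2 * ‖⟪x i, x j⟫_ℂ‖) := by rw [hsmall]
  rw [le_sub_iff_add_le, ← le_sub_iff_add_le', div_le_iff₀ (by positivity)]
  linarith

end RieszBasis

theorem abs_norm_sum_smul_sq_sub_le {H : Type*} [NormedAddCommGroup H]
    [InnerProductSpace ℂ H] {f g : H} (hf : ‖f‖ = 1) (hg : ‖g‖ = 1) (c : Fin 2 → ℂ) :
    |‖∑ i, c i • ![f, g] i‖ ^ 2 - ∑ i, ‖c i‖ ^ 2| ≤ ‖⟪f, g⟫_ℂ‖ * ∑ i, ‖c i‖ ^ 2 := by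
  simp only [Fin.sum_univ_two, Matrix.cons_val_zero, Matrix.cons_val_one]
  have hexpand : ‖c 0 • f + c 1 • g‖ ^ 2 - (‖c 0‖ ^ 2 + ‖c 1‖ ^ 2)
      = 2 * (starRingEnd ℂ (c 0) * c 1 * ⟪f, g⟫_ℂ).re := by
    rw [@norm_add_sq ℂ, inner_smul_left, inner_smul_right, norm_smul, norm_smul, hf, hg]
    simp only [RCLike.re_to_complex, ← mul_assoc]
    ring
  have hcross : |(starRingEnd ℂ (c 0) * c 1 * ⟪f, g⟫_ℂ).re| ≤ ‖c 0‖ * ‖c 1‖ * ‖⟪f, g⟫_ℂ‖ := by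
    simpa using Complex.abs_re_le_norm (starRingEnd ℂ (c 0) * c 1 * ⟪f, g⟫_ℂ)
  rw [hexpand, abs_mul, abs_two]
  nlinarith [mul_le_mul_of_nonneg_right (two_mul_le_add_sq ‖c 0‖ ‖c 1‖) (norm_nonneg ⟪f, g⟫_ℂ)]

section FiniteFamilies

variable {H : Type*} [NormedAddCommGroup H] [InnerProductSpace ℂ H] {ι : Type*} [Fintype ι]
  {z : ι → H} {a : ℝ}

theorem linearIndependent_of_mul_sum_sq_le (ha : 0 < a)
    (hlower : ∀ c : ι → ℂ, a * ∑ i, ‖c i‖ ^ 2 ≤ ‖∑ i, c i • z i‖ ^ 2) :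
    LinearIndependent ℂ z := by
  refine Fintype.linearIndependent_iff.2 fun c hc i => ?_
  have hsum : ∑ i, ‖c i‖ ^ 2 ≤ 0 := by
    have := hlower c
    rw [hc, norm_zero, zero_pow two_ne_zero] at this
    exact nonpos_of_mul_nonpos_right this ha
  have hzero := (Finset.sum_eq_zero_iff_of_nonneg fun i _ => sq_nonneg ‖c i‖).1
    (le_antisymm hsum (by positivity)) i (Finset.mem_univ i)
  simpa using hzero

theorem span_range_eq_of_mul_sum_sq_le {W : Submodule ℂ H} [FiniteDimensional ℂ W]
    (hdim : Module.finrank ℂ W = Fintype.card ι) (hz : ∀ i, z i ∈ W) (ha : 0 < a)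
    (hlower : ∀ c : ι → ℂ, a * ∑ i, ‖c i‖ ^ 2 ≤ ‖∑ i, c i • z i‖ ^ 2) :
    Submodule.span ℂ (Set.range z) = W :=
  Submodule.eq_of_le_of_finrank_le (Submodule.span_le.2 (Set.range_subset_iff.2 hz)) <| by
    rw [hdim, finrank_span_eq_card (linearIndependent_of_mul_sum_sq_le ha hlower)]

end FiniteFamilies

namespace IsBasisOfProjections

variable {H : Type*} [NormedAddCommGroup H] [InnerProductSpace ℂ H] {Γ : Type*}
  {Q : Γ → H →L[ℂ] H} {ι : Type*} [Fintype ι]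

theorem apply_eq_self_of_mem (hQ : IsBasisOfProjections Q) {γ : Γ} {y : H}
    (hy : y ∈ LinearMap.range (Q γ).toLinearMap) : Q γ y = y := by
  obtain ⟨x, rfl⟩ := hy
  exact hQ.1 γ x

theorem topologicalClosure_eq_top (hQ : IsBasisOfProjections Q) {W : Submodule ℂ H}
    (hW : ∀ γ, LinearMap.range (Q γ).toLinearMap ≤ W) : W.topologicalClosure = ⊤ :=
  eq_top_iff.2 fun x _ => mem_closure_of_tendsto (hQ.2.2 x) <| .of_forall fun _ =>
    W.sum_mem fun γ _ => hW γ ⟨x, rfl⟩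

variable [CompleteSpace H]

theorem inner_eq_zero (hQ : IsBasisOfProjections Q) (hQsa : ∀ γ, IsSelfAdjoint (Q γ))
    {α β : Γ} (hαβ : α ≠ β) (x y : H) : ⟪Q α x, Q β y⟫_ℂ = 0 :=
  calc ⟪Q α x, Q β y⟫_ℂ = ⟪x, Q α (Q β y)⟫_ℂ := (hQsa α).isSymmetric x (Q β y)
    _ = 0 := by rw [hQ.2.1 α β hαβ, inner_zero_right]

theorem orthogonalFamily (hQ : IsBasisOfProjections Q) (hQsa : ∀ γ, IsSelfAdjoint (Q γ)) :
    OrthogonalFamily ℂ (fun γ => LinearMap.range (Q γ).toLinearMap)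
      fun γ => (LinearMap.range (Q γ).toLinearMap).subtypeₗᵢ := by
  rintro α β hαβ ⟨_, x, rfl⟩ ⟨_, y, rfl⟩
  exact hQ.inner_eq_zero hQsa hαβ x y

theorem hasSum_norm_sq (hQ : IsBasisOfProjections Q) (hQsa : ∀ γ, IsSelfAdjoint (Q γ)) (x : H) :
    HasSum (fun γ => ‖Q γ x‖ ^ 2) (‖x‖ ^ 2) := by
  have hinner : ∀ γ, ⟪x, Q γ x⟫_ℂ = ⟪Q γ x, Q γ x⟫_ℂ := fun γ => by
    simpa only [ContinuousLinearMap.coe_coe, hQ.1] using ((hQsa γ).isSymmetric x (Q γ x)).symm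
  have h := ((hQ.2.2 x).mapL (innerSL ℂ x)).mapL Complex.reCLM
  simp only [innerSL_apply_apply, hinner, Complex.reCLM_apply] at h
  simpa only [← RCLike.re_to_complex, inner_self_eq_norm_sq] using h

theorem exists_hasSum_blocks (hQ : IsBasisOfProjections Q) (hQsa : ∀ γ, IsSelfAdjoint (Q γ))
    (T : Γ → H →L[ℂ] H) (hT : ∀ γ x, T γ x ∈ LinearMap.range (Q γ).toLinearMap) {M : ℝ}
    (hM : ∀ γ x, ‖T γ x‖ ^ 2 ≤ M * ‖Q γ x‖ ^ 2) :
    ∃ S : H →L[ℂ] H, ∀ x,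
      HasSum (fun γ => T γ x) (S x) ∧ HasSum (fun γ => ‖T γ x‖ ^ 2) (‖S x‖ ^ 2) := by
  have hV := hQ.orthogonalFamily hQsa
  have hsum : ∀ x, Summable fun γ => T γ x := fun x =>
    (hV.summable_iff_norm_sq_summable fun γ => ⟨T γ x, hT γ x⟩).2 <|
      .of_nonneg_of_le (fun _ => by positivity) (fun γ => hM γ x)
        ((hQ.hasSum_norm_sq hQsa x).summable.mul_left M)
  have hnorm : ∀ x, HasSum (fun γ => ‖T γ x‖ ^ 2) (‖∑' γ, T γ x‖ ^ 2) := fun x =>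
    (((continuous_norm.pow 2).tendsto _).comp (hsum x).hasSum).congr fun s =>
      hV.norm_sum (fun γ => ⟨T γ x, hT γ x⟩) s
  let S : H →ₗ[ℂ] H :=
    { toFun := fun x => ∑' γ, T γ x
      map_add' := fun x y => by
        simp only [map_add]
        exact (hsum x).tsum_add (hsum y)
      map_smul' := fun c x => by
        simp only [map_smul, RingHom.id_apply]
        exact (hsum x).tsum_const_smul c }
  have hbound : ∀ x, ‖S x‖ ≤ √M * ‖x‖ := fun x => by
    have h : ‖S x‖ ^ 2 ≤ M * ‖x‖ ^ 2 :=
      hasSum_le (fun γ => hM γ x) (hnorm x) ((hQ.hasSum_norm_sq hQsa x).mul_left M)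
    rw [← Real.sqrt_sq (norm_nonneg x), ← Real.sqrt_mul' _ (sq_nonneg _)]
    exact Real.le_sqrt_of_sq_le h
  exact ⟨S.mkContinuous √M hbound, fun x => ⟨(hsum x).hasSum, hnorm x⟩⟩

theorem exists_hilbertBasis (hQ : IsBasisOfProjections Q) (hQsa : ∀ γ, IsSelfAdjoint (Q γ))
    (e : ∀ γ, OrthonormalBasis ι ℂ (LinearMap.range (Q γ).toLinearMap)) :
    ∃ E : HilbertBasis (Γ × ι) ℂ H, ∀ γ i, E (γ, i) = e γ i := by
  have horth : Orthonormal ℂ fun p : Γ × ι => (e p.1 p.2 : H) :=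
    ((hQ.orthogonalFamily hQsa).orthonormal_sigma_orthonormal fun γ => (e γ).orthonormal).comp
      _ (Equiv.sigmaEquivProd Γ ι).symm.injective
  have hspan :
      ⊤ ≤ (Submodule.span ℂ (Set.range fun p : Γ × ι => (e p.1 p.2 : H))).topologicalClosure := by
    refine (hQ.topologicalClosure_eq_top fun γ y hy => ?_).ge
    have hrepr := congrArg Subtype.val ((e γ).sum_repr ⟨y, hy⟩)
    simp only [Submodule.coe_sum, Submodule.coe_smul] at hrepr
    rw [← hrepr]
    exact Submodule.sum_mem _ fun i _ =>
      Submodule.smul_mem _ _ (Submodule.subset_span ⟨(γ, i), rfl⟩)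
  exact ⟨.mk horth hspan, fun γ i => congrFun (HilbertBasis.coe_mk horth hspan) (γ, i)⟩

theorem sum_sq_norm_inner_eq (hQ : IsBasisOfProjections Q) (hQsa : ∀ γ, IsSelfAdjoint (Q γ))
    {γ : Γ} (e : OrthonormalBasis ι ℂ (LinearMap.range (Q γ).toLinearMap)) (x : H) :
    ∑ i, ‖⟪(e i : H), x⟫_ℂ‖ ^ 2 = ‖Q γ x‖ ^ 2 := by
  have hinner : ∀ i, ⟪(e i : H), x⟫_ℂ = ⟪e i, ⟨Q γ x, x, rfl⟩⟫_ℂ := fun i =>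
    calc ⟪(e i : H), x⟫_ℂ = ⟪Q γ (e i), x⟫_ℂ := by rw [hQ.apply_eq_self_of_mem (e i).2]
      _ = ⟪(e i : H), Q γ x⟫_ℂ := (hQsa γ).isSymmetric _ x
  simp only [hinner, OrthonormalBasis.sum_sq_norm_inner_right, Submodule.coe_norm]

theorem isRieszBasisVectors_of_blocks (hQ : IsBasisOfProjections Q)
    (hQsa : ∀ γ, IsSelfAdjoint (Q γ)) [Nonempty ι]
    (hdim : ∀ γ, Module.finrank ℂ (LinearMap.range (Q γ).toLinearMap) = Fintype.card ι)
    (z : Γ → ι → H) (hz : ∀ γ i, z γ i ∈ LinearMap.range (Q γ).toLinearMap) {a b : ℝ}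
    (ha : 0 < a) (hlower : ∀ γ (c : ι → ℂ), a * ∑ i, ‖c i‖ ^ 2 ≤ ‖∑ i, c i • z γ i‖ ^ 2)
    (hupper : ∀ γ (c : ι → ℂ), ‖∑ i, c i • z γ i‖ ^ 2 ≤ b * ∑ i, ‖c i‖ ^ 2) :
    IsRieszBasisVectors fun p : Γ × ι => z p.1 p.2 := by
  have : ∀ γ, FiniteDimensional ℂ (LinearMap.range (Q γ).toLinearMap) := fun γ =>
    .of_finrank_pos (by rw [hdim γ]; exact Fintype.card_pos)
  let e γ : OrthonormalBasis ι ℂ (LinearMap.range (Q γ).toLinearMap) :=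
    (stdOrthonormalBasis ℂ _).reindex (Fintype.equivFinOfCardEq (hdim γ).symm).symm
  obtain ⟨E, hE⟩ := hQ.exists_hilbertBasis hQsa e
  let T γ : H →L[ℂ] H := ∑ i, rankOne ℂ (z γ i) (e γ i : H)
  have hT γ x : T γ x = ∑ i, ⟪(e γ i : H), x⟫_ℂ • z γ i := by simp [T]
  obtain ⟨S, hS⟩ := hQ.exists_hasSum_blocks hQsa T
    (fun γ x => by rw [hT]; exact Submodule.sum_mem _ fun i _ => Submodule.smul_mem _ _ (hz γ i))
    (M := b) fun γ x => by rw [hT, ← hQ.sum_sq_norm_inner_eq hQsa (e γ)]; exact hupper γ _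
  have hSlower x : √a * ‖x‖ ≤ ‖S x‖ := by
    have h : a * ‖x‖ ^ 2 ≤ ‖S x‖ ^ 2 :=
      hasSum_le (fun γ => by rw [hT, ← hQ.sum_sq_norm_inner_eq hQsa (e γ)]; exact hlower γ _)
        ((hQ.hasSum_norm_sq hQsa x).mul_left a) (hS x).2
    rw [← Real.sqrt_sq (norm_nonneg x), ← Real.sqrt_sq (norm_nonneg (S x)),
      ← Real.sqrt_mul ha.le]
    exact Real.sqrt_le_sqrt h
  have hSE γ₀ i₀ : S (E (γ₀, i₀)) = z γ₀ i₀ := by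
    classical
    refine ((hS (E (γ₀, i₀))).1.unique ?_)
    convert hasSum_ite_eq γ₀ (z γ₀ i₀) using 1
    ext γ
    simp only [hT, ← hE, orthonormal_iff_ite.1 E.orthonormal, Prod.mk.injEq, ite_and]
    split_ifs with h <;> simp [h]
  have hdense : DenseRange S := by
    rw [DenseRange, ← ContinuousLinearMap.coe_coe, ← LinearMap.coe_range,
      Submodule.dense_iff_topologicalClosure_eq_top]
    refine hQ.topologicalClosure_eq_top fun γ => ?_
    rw [← span_range_eq_of_mul_sum_sq_le (hdim γ) (hz γ) ha (hlower γ), Submodule.span_le]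
    rintro _ ⟨i, rfl⟩
    exact ⟨E (γ, i), hSE γ i⟩
  convert isRieszBasisVectors_of_le_norm_of_denseRange E S (Real.sqrt_pos.2 ha) hSlower hdense
  exact (hSE _ _).symm

end IsBasisOfProjections

theorem IsRieszBasisOfProjections.isRieszBasisVectors_of_blocks {H : Type*}
    [NormedAddCommGroup H] [InnerProductSpace ℂ H] [CompleteSpace H] {Γ : Type*}
    {P : Γ → H →L[ℂ] H} (hP : IsRieszBasisOfProjections P) {ι : Type*} [Fintype ι] [Nonempty ι]
    (hdim : ∀ γ, Module.finrank ℂ (LinearMap.range (P γ).toLinearMap) = Fintype.card ι)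
    (z : Γ → ι → H) (hz : ∀ γ i, z γ i ∈ LinearMap.range (P γ).toLinearMap) {a b : ℝ}
    (ha : 0 < a) (hlower : ∀ γ (c : ι → ℂ), a * ∑ i, ‖c i‖ ^ 2 ≤ ‖∑ i, c i • z γ i‖ ^ 2)
    (hupper : ∀ γ (c : ι → ℂ), ‖∑ i, c i • z γ i‖ ^ 2 ≤ b * ∑ i, ‖c i‖ ^ 2) :
    IsRieszBasisVectors fun p : Γ × ι => z p.1 p.2 := by
  obtain ⟨A, Q, hQ, hQsa, hPAQ⟩ := hP
  have hrange γ : LinearMap.range (P γ).toLinearMap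
      = (LinearMap.range (Q γ).toLinearMap).map (A : H →ₗ[ℂ] H) := by
    have hcomp : (P γ).toLinearMap
        = (A : H →ₗ[ℂ] H) ∘ₗ (Q γ).toLinearMap ∘ₗ (A.symm : H →ₗ[ℂ] H) := LinearMap.ext (hPAQ γ)
    rw [hcomp, LinearMap.range_comp, LinearMap.range_comp_of_range_eq_top _
      (LinearEquiv.range A.symm.toLinearEquiv)]
  let u γ i := A.symm (z γ i)
  have hu γ i : u γ i ∈ LinearMap.range (Q γ).toLinearMap := by
    obtain ⟨y, hy, hyz⟩ := (hrange γ ▸ hz γ i :)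
    simpa [u, ← hyz] using hy
  have hsum γ (c : ι → ℂ) : ∑ i, c i • u γ i = A.symm (∑ i, c i • z γ i) := by simp [u]
  obtain ⟨C, hC, hAC⟩ := (A : H →L[ℂ] H).exists_sq_norm_le
  obtain ⟨C', hC', hAC'⟩ := (A.symm : H →L[ℂ] H).exists_sq_norm_le
  have hlower' γ (c : ι → ℂ) : a / C * ∑ i, ‖c i‖ ^ 2 ≤ ‖∑ i, c i • u γ i‖ ^ 2 := by
    have hA : ‖∑ i, c i • z γ i‖ ^ 2 ≤ C * ‖∑ i, c i • u γ i‖ ^ 2 := by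
      simpa [hsum] using hAC (A.symm (∑ i, c i • z γ i))
    rw [div_mul_eq_mul_div, div_le_iff₀ hC, mul_comm _ C]
    exact (hlower γ c).trans hA
  have hupper' γ (c : ι → ℂ) : ‖∑ i, c i • u γ i‖ ^ 2 ≤ C' * b * ∑ i, ‖c i‖ ^ 2 := by
    rw [hsum, mul_assoc]
    exact (hAC' _).trans (mul_le_mul_of_nonneg_left (hupper γ c) hC'.le)
  have hdim' γ : Module.finrank ℂ (LinearMap.range (Q γ).toLinearMap) = Fintype.card ι := by
    rw [← hdim γ, hrange, LinearEquiv.finrank_map_eq]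
  convert (hQ.isRieszBasisVectors_of_blocks hQsa hdim' u hu (by positivity) hlower'
    hupper').map A
  simp [u]

theorem riesz_basis_of_two_dim_projections_iff_general
    {H : Type*} [NormedAddCommGroup H] [InnerProductSpace ℂ H] [CompleteSpace H]
    {Γ : Type*} (P : Γ → H →L[ℂ] H)
    (hP : IsRieszBasisOfProjections P)
    (hdim : ∀ γ, Module.finrank ℂ (LinearMap.range (P γ).toLinearMap) = 2)
    (f g : Γ → H)
    (hf : ∀ γ, ‖f γ‖ = 1) (hg : ∀ γ, ‖g γ‖ = 1)
    (hfr : ∀ γ, f γ ∈ LinearMap.range (P γ).toLinearMap)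
    (hgr : ∀ γ, g γ ∈ LinearMap.range (P γ).toLinearMap) :
    IsRieszBasisVectors (Sum.elim f g) ↔ ∃ κ : ℝ, κ < 1 ∧ ∀ γ, ‖(inner ℂ (f γ) (g γ) : ℂ)‖ ≤ κ := by
  constructor
  · intro hRB
    obtain ⟨κ, hκ, hκle⟩ := hRB.exists_norm_inner_le
    exact ⟨κ, hκ, fun γ => hκle (Sum.inl γ) (Sum.inr γ) Sum.inl_ne_inr (hf γ) (hg γ)⟩
  · rintro ⟨κ, hκ, hκle⟩
    have hpair γ c := abs_le.1 ((abs_norm_sum_smul_sq_sub_le (hf γ) (hg γ) c).trans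
      (mul_le_mul_of_nonneg_right (hκle γ) (by positivity)))
    have hblocks := hP.isRieszBasisVectors_of_blocks (ι := Fin 2) (a := 1 - κ) (b := 1 + κ) hdim
      (fun γ => ![f γ, g γ])
      (fun γ i => by fin_cases i; exacts [hfr γ, hgr γ]) (sub_pos.2 hκ)
      (fun γ c => by linarith [(hpair γ c).1]) (fun γ c => by linarith [(hpair γ c).2])
    convert hblocks.comp_equiv ((Equiv.boolProdEquivSum Γ).symm.trans
      ((Equiv.prodComm _ _).trans ((Equiv.refl Γ).prodCongr finTwoEquiv.symm)))
    ext (γ | γ) <;> rfl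

/-- Lemma on splitting a Riesz basis of two-dimensional projections: if `f_γ, g_γ`
are linearly independent unit vectors in `Ran P_γ`, then `{f_γ, g_γ}` is a Riesz
basis of `H` iff `sup_γ |⟨f_γ, g_γ⟩| < 1`. -/
theorem riesz_basis_of_two_dim_projections_iff
    {H : Type*} [NormedAddCommGroup H] [InnerProductSpace ℂ H] [CompleteSpace H]
    {Γ : Type*} (P : Γ → H →L[ℂ] H)
    (hP : IsRieszBasisOfProjections P)
    (hdim : ∀ γ, Module.finrank ℂ (LinearMap.range (P γ).toLinearMap) = 2)
    (f g : Γ → H)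
    (hf : ∀ γ, ‖f γ‖ = 1) (hg : ∀ γ, ‖g γ‖ = 1)
    (hli : ∀ γ, LinearIndependent ℂ ![f γ, g γ])
    (hfr : ∀ γ, f γ ∈ LinearMap.range (P γ).toLinearMap)
    (hgr : ∀ γ, g γ ∈ LinearMap.range (P γ).toLinearMap) :
    IsRieszBasisVectors (Sum.elim f g) ↔ ∃ κ : ℝ, κ < 1 ∧ ∀ γ, ‖(inner ℂ (f γ) (g γ) : ℂ)‖ ≤ κ :=
  riesz_basis_of_two_dim_projections_iff_general P hP hdim f g hf hg hfr hgr
end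

section
/- Let f and g be linearly independent unit vectors in a two-dimensional Hilbert space E, and let f* , g* be the dual functionals on E (so x = f*(x) f + g*(x) g for all x ∈ E). Then the one-dimensional projection P¹(x) = f*(x) f satisfies ‖P¹‖² ≥ (1 − |⟨f,g⟩|²)⁻¹. -/
/-!
The component `x = f - ⟪g, f⟫ g` of `f` orthogonal to `g` has `f*(x) = 1`, so `P¹ x = f`, and
by Pythagoras `‖x‖² = 1 - |⟨f, g⟩|²`. Hence `‖P¹‖ ≥ ‖P¹ x‖ / ‖x‖ = (1 - |⟨f, g⟩|²)^(-1/2)`.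
-/

open scoped InnerProductSpace

theorem LinearIndependent.pair_coord_left {R M : Type*} [Semiring R] [AddCommMonoid M]
    [Module R M] {f g : M} (hli : LinearIndependent R ![f, g]) {φ ψ : M → R}
    (hcoord : ∀ x, x = φ x • f + ψ x • g) : φ f = 1 ∧ φ g = 0 :=
  ⟨(hli.eq_of_pair (s' := 1) (t' := 0) (by simpa using (hcoord f).symm)).1,
    (hli.eq_of_pair (s' := 0) (t' := 1) (by simpa using (hcoord g).symm)).1⟩

theorem norm_sub_inner_smul_sq {𝕜 E : Type*} [RCLike 𝕜] [NormedAddCommGroup E]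
    [InnerProductSpace 𝕜 E] {g : E} (hg : ‖g‖ = 1) (f : E) :
    ‖f - ⟪g, f⟫_𝕜 • g‖ ^ 2 = ‖f‖ ^ 2 - ‖⟪g, f⟫_𝕜‖ ^ 2 := by
  rw [@norm_sub_sq 𝕜, inner_smul_right, ← inner_conj_symm g f, RCLike.conj_mul, norm_smul, hg,
    ← RCLike.ofReal_pow, RCLike.ofReal_re, RCLike.norm_conj]
  ring

theorem norm_sq_coord_projection_ge_general
    {E : Type*} [NormedAddCommGroup E] [InnerProductSpace ℂ E]
    (f g : E) (hf : ‖f‖ = 1) (hg : ‖g‖ = 1)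
    (hli : LinearIndependent ℂ ![f, g])
    (fstar gstar : E →L[ℂ] ℂ)
    (hcoord : ∀ x : E, x = fstar x • f + gstar x • g)
    (P1 : E →L[ℂ] E) (hP1 : ∀ x, P1 x = fstar x • f) :
    (1 - ‖(inner ℂ f g : ℂ)‖ ^ 2)⁻¹ ≤ ‖P1‖ ^ 2 := by
  obtain ⟨hff, hfg⟩ := hli.pair_coord_left hcoord
  set x := f - ⟪g, f⟫_ℂ • g
  have hP1x : P1 x = f := by simp [x, hP1, hff, hfg]
  have hx : ‖x‖ ^ 2 = 1 - ‖⟪f, g⟫_ℂ‖ ^ 2 := by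
    rw [norm_sub_inner_smul_sq hg, hf, norm_inner_symm, one_pow]
  calc (1 - ‖⟪f, g⟫_ℂ‖ ^ 2)⁻¹ = (‖P1 x‖ / ‖x‖) ^ 2 := by
        rw [hP1x, hf, div_pow, hx, one_pow, one_div]
    _ ≤ ‖P1‖ ^ 2 := pow_le_pow_left₀ (by positivity) (P1.ratio_le_opNorm x) 2

/-- In a two-dimensional complex inner product space `E`, let `f, g` be linearly
independent unit vectors with dual (coordinate) functionals `f*, g*`, so that
`x = f*(x) f + g*(x) g` for all `x`. Then the one-dimensional projection
`P¹ x = f*(x) f` satisfies `‖P¹‖² ≥ (1 − |⟨f,g⟩|²)⁻¹`. -/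
theorem norm_sq_coord_projection_ge
    {E : Type*} [NormedAddCommGroup E] [InnerProductSpace ℂ E]
    (hdim : Module.finrank ℂ E = 2)
    (f g : E) (hf : ‖f‖ = 1) (hg : ‖g‖ = 1)
    (hli : LinearIndependent ℂ ![f, g])
    (fstar gstar : E →L[ℂ] ℂ)
    (hcoord : ∀ x : E, x = fstar x • f + gstar x • g)
    (P1 : E →L[ℂ] E) (hP1 : ∀ x, P1 x = fstar x • f) :
    (1 - ‖(inner ℂ f g : ℂ)‖ ^ 2)⁻¹ ≤ ‖P1‖ ^ 2 :=
  norm_sq_coord_projection_ge_general f g hf hg hli fstar gstar hcoord P1 hP1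
end

section
/- Let L be the Dirac operator with skew-symmetric potential v = [[0, P],[−P̄, 0]]. If λ ∈ ℝ and w = (w₁, w₂) is an eigenvector of L with eigenvalue λ (under Per⁺ or Per⁻ boundary conditions), then (w̄₂, −w̄₁) is also an eigenvector with eigenvalue λ, and it is orthogonal to w in L²([0,π], ℂ²); hence every real eigenvalue of L has geometric multiplicity at least 2. -/
open Complex

noncomputable def diracL (P Q : ℝ → ℂ) (y : ℝ → ℂ × ℂ) : ℝ → ℂ × ℂ := fun x =>
  (Complex.I * deriv (fun s => (y s).1) x + P x * (y x).2,
   -Complex.I * deriv (fun s => (y s).2) x + Q x * (y x).1)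

def diracBC (σ : ℂ) (y : ℝ → ℂ × ℂ) : Prop := y Real.pi = σ • y 0

/-- The antilinear map `(w₁, w₂) ↦ (w̄₂, −w̄₁)` applied pointwise. -/
noncomputable def diracFlip (y : ℝ → ℂ × ℂ) : ℝ → ℂ × ℂ := fun x =>
  ((starRingEnd ℂ) ((y x).2), -(starRingEnd ℂ) ((y x).1))

/-!
The flip `J (w₁, w₂) = (w̄₂, −w̄₁)` is antilinear with `J² = −1`, and for a skew-symmetric
potential it commutes with `L`. Hence `J` maps the `λ`-eigenspace to the `λ̄`-eigenspace, which is
the same space when `λ` is real, and it preserves the `Per±` conditions since `±1` is real.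
Pointwise `⟨w, Jw⟩ = w̄₁ w̄₂ − w̄₂ w̄₁ = 0`, and `Jw = a w` would give
`−w = J² w = |a|² w`, so `w, Jw` are linearly independent.
-/

open ComplexConjugate

lemma deriv_conj (f : ℝ → ℂ) (x : ℝ) :
    deriv (fun s => conj (f s)) x = conj (deriv f x) :=
  deriv.star

section Flip

variable (y : ℝ → ℂ × ℂ)

lemma diracFlip_diracFlip : diracFlip (diracFlip y) = -y := by
  funext x
  simp [diracFlip, Prod.ext_iff]

lemma diracFlip_smul (c : ℂ) : diracFlip (c • y) = conj c • diracFlip y := by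
  funext x
  simp [diracFlip]

lemma diracFlip_inner_eq_zero (x : ℝ) :
    conj (y x).1 * (diracFlip y x).1 + conj (y x).2 * (diracFlip y x).2 = 0 := by
  simp only [diracFlip]
  ring

lemma linearIndependent_diracFlip (hy : y ≠ 0) : LinearIndependent ℂ ![y, diracFlip y] := by
  refine (LinearIndependent.pair_iff' hy).mpr fun a ha => hy ?_
  have hflip : -y = (normSq a : ℂ) • y := by
    rw [← diracFlip_diracFlip, ← ha, diracFlip_smul, ← ha, smul_smul, normSq_eq_conj_mul_self]
  have hzero : ((normSq a + 1 : ℝ) : ℂ) • y = 0 := by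
    rw [ofReal_add, ofReal_one, add_smul, one_smul, ← hflip, neg_add_cancel]
  exact (smul_eq_zero.mp hzero).resolve_left
    (ofReal_ne_zero.mpr (add_pos_of_nonneg_of_pos (normSq_nonneg a) one_pos).ne')

lemma diracL_diracFlip {P Q : ℝ → ℂ} (hQ : Q = fun x => -conj (P x)) :
    diracL P Q (diracFlip y) = diracFlip (diracL P Q y) := by
  subst hQ
  funext x
  simp only [diracL, diracFlip, deriv.fun_neg, deriv_conj, map_add, map_mul, map_neg,
    conj_I, conj_conj, Prod.mk.injEq]
  constructor <;> ring

end Flip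

lemma diracBC.diracFlip {σ : ℂ} (hσ : conj σ = σ) {y : ℝ → ℂ × ℂ} (h : diracBC σ y) :
    diracBC σ (diracFlip y) := by
  unfold diracBC at h ⊢
  simp [_root_.diracFlip, h, hσ]

theorem skew_symmetric_real_eigenvalue_multiplicity_general
    (P Q : ℝ → ℂ) (hQ : Q = fun x => -(starRingEnd ℂ) (P x))
    (σ : ℂ) (hσ : σ = 1 ∨ σ = -1)
    (lam : ℂ) (hlam : lam.im = 0)
    (y : ℝ → ℂ × ℂ)
    (hy0 : y ≠ 0)
    (hbc : diracBC σ y)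
    (heig : diracL P Q y = fun x => lam • y x) :
    (diracL P Q (diracFlip y) = fun x => lam • diracFlip y x) ∧
    diracBC σ (diracFlip y) ∧
    (∫ x in (0:ℝ)..Real.pi,
        ((starRingEnd ℂ) ((y x).1) * (diracFlip y x).1 +
         (starRingEnd ℂ) ((y x).2) * (diracFlip y x).2)) = 0 ∧
    LinearIndependent ℂ ![y, diracFlip y] := by
  have hlam_real : conj lam = lam := conj_eq_iff_im.mpr hlam
  have hσ_real : conj σ = σ := by rcases hσ with rfl | rfl <;> simp
  refine ⟨?_, hbc.diracFlip hσ_real, ?_, linearIndependent_diracFlip y hy0⟩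
  · rw [diracL_diracFlip y hQ, heig]
    exact (diracFlip_smul y lam).trans (by rw [hlam_real]; rfl)
  · simp only [diracFlip_inner_eq_zero, intervalIntegral.integral_zero]

/-- For the Dirac operator with skew-symmetric potential `v = [[0,P],[−P̄,0]]`:
if `λ ∈ ℝ` and `w` is an eigenvector with eigenvalue `λ` (under `Per±`), then
`(w̄₂, −w̄₁)` is also an eigenvector with eigenvalue `λ`, satisfies the same
boundary condition, and is orthogonal to `w` in `L²([0,π],ℂ²)`; hence every
real eigenvalue has geometric multiplicity at least 2. -/
theorem skew_symmetric_real_eigenvalue_multiplicity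
    (P Q : ℝ → ℂ) (hQ : Q = fun x => -(starRingEnd ℂ) (P x))
    (σ : ℂ) (hσ : σ = 1 ∨ σ = -1)
    (lam : ℂ) (hlam : lam.im = 0)
    (y : ℝ → ℂ × ℂ)
    (hy1 : Differentiable ℝ fun s => (y s).1)
    (hy2 : Differentiable ℝ fun s => (y s).2)
    (hy0 : y ≠ 0)
    (hbc : diracBC σ y)
    (heig : diracL P Q y = fun x => lam • y x) :
    (diracL P Q (diracFlip y) = fun x => lam • diracFlip y x) ∧
    diracBC σ (diracFlip y) ∧
    (∫ x in (0:ℝ)..Real.pi,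
        ((starRingEnd ℂ) ((y x).1) * (diracFlip y x).1 +
         (starRingEnd ℂ) ((y x).2) * (diracFlip y x).2)) = 0 ∧
    LinearIndependent ℂ ![y, diracFlip y] :=
  skew_symmetric_real_eigenvalue_multiplicity_general P Q hQ σ hσ lam hlam y hy0 hbc heig
end
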